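/- In a two-component symmetric Gaussian mixture guided toward component y = +1 with classifier guidance of strength η ≥ 0, the guided score s̃(x) = ∇log p(x) + η∇log c(+1|x) shifts probability mass toward the component: the resulting tilted density proportional to p(x)·c(+1|x)^η has mean whose inner product with μ is nondecreasing in η. -/

import Mathlib

open MeasureTheory

noncomputable def isoGaussD (D : ℕ) (m x : EuclideanSpace ℝ (Fin D)) : ℝ :=
  (Real.sqrt ((2 * Real.pi) ^ D))⁻¹ * Real.exp (-‖x - m‖ ^ 2 / 2)

/-!
The posterior is `c(+1|x) = σ(2⟪μ, x⟫)`, so raising the tilt from `η₁` to `η₂` multiplies the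
weight by `c ^ (η₂ - η₁)`, a nondecreasing function of `⟪μ, x⟫`. Reweighting by a factor that is
comonotone with `f` can only raise the mean of `f`: this is Chebyshev's integral inequality,
obtained by integrating `(f x - f y) * (v x * u y - u x * v y) ≥ 0` over the product measure and
symmetrising in `(x, y)`.
-/

section WeightedMean

variable {α : Type*} [MeasurableSpace α] {ν : Measure α} {f u v r : α → ℝ}

theorem integral_mul_integral_le_of_forall_sub_mul_sub_nonneg [SFinite ν]
    (hu : Integrable u ν) (hv : Integrable v ν)
    (hfu : Integrable (fun x => f x * u x) ν) (hfv : Integrable (fun x => f x * v x) ν)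
    (h : ∀ x y, 0 ≤ (f x - f y) * (v x * u y - u x * v y)) :
    (∫ x, f x * u x ∂ν) * ∫ x, v x ∂ν ≤ (∫ x, f x * v x ∂ν) * ∫ x, u x ∂ν := by
  set H : α × α → ℝ := fun z => f z.1 * v z.1 * u z.2 - f z.1 * u z.1 * v z.2
  have hH_int : Integrable H (ν.prod ν) := (hfv.mul_prod hu).sub (hfu.mul_prod hv)
  have hH : ∫ z, H z ∂ν.prod ν
      = (∫ x, f x * v x ∂ν) * (∫ x, u x ∂ν) - (∫ x, f x * u x ∂ν) * ∫ x, v x ∂ν := by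
    rw [integral_sub (hfv.mul_prod hu) (hfu.mul_prod hv)]
    exact congrArg₂ (· - ·) (integral_prod_mul (fun x => f x * v x) u)
      (integral_prod_mul (fun x => f x * u x) v)
  have hsymm : 0 ≤ ∫ z, H z + H z.swap ∂ν.prod ν :=
    integral_nonneg fun z =>
      (h z.1 z.2).trans_eq (by simp only [H, Prod.fst_swap, Prod.snd_swap]; ring)
  rw [integral_add (g := fun z : α × α => H z.swap) hH_int hH_int.swap, integral_prod_swap H,
    hH] at hsymm
  linarith

theorem integral_mul_integral_le_of_monovary [SFinite ν] (hr : Monovary r f) (hu0 : ∀ x, 0 ≤ u x)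
    (hvru : ∀ x, v x = r x * u x) (hu : Integrable u ν) (hv : Integrable v ν)
    (hfu : Integrable (fun x => f x * u x) ν) (hfv : Integrable (fun x => f x * v x) ν) :
    (∫ x, f x * u x ∂ν) * ∫ x, v x ∂ν ≤ (∫ x, f x * v x ∂ν) * ∫ x, u x ∂ν := by
  refine integral_mul_integral_le_of_forall_sub_mul_sub_nonneg hu hv hfu hfv fun x y => ?_
  have hfr : 0 ≤ (r x - r y) * (f x - f y) := monovary_iff_forall_mul_nonneg.mp hr y x
  calc 0 ≤ u x * u y * ((r x - r y) * (f x - f y)) := mul_nonneg (mul_nonneg (hu0 x) (hu0 y)) hfr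
    _ = (f x - f y) * (v x * u y - u x * v y) := by rw [hvru, hvru]; ring

theorem integral_pos_of_forall_pos [NeZero ν] (hf : ∀ x, 0 < f x) (hint : Integrable f ν) :
    0 < ∫ x, f x ∂ν := by
  rw [integral_pos_iff_support_of_nonneg (fun x => (hf x).le) hint,
    Function.support_eq_univ fun x => (hf x).ne']
  exact Measure.measure_univ_pos.mpr (NeZero.ne ν)

end WeightedMean

section Gaussian

variable {D : ℕ} (m x : EuclideanSpace ℝ (Fin D))

theorem isoGaussD_pos : 0 < isoGaussD D m x := by
  unfold isoGaussD
  positivity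

theorem isoGaussD_neg : isoGaussD D (-m) x = isoGaussD D m x * Real.exp (-(2 * inner ℝ m x)) := by
  have hnorm : ‖x - -m‖ ^ 2 = ‖x - m‖ ^ 2 + 4 * inner ℝ m x := by
    rw [sub_neg_eq_add, norm_add_sq_real, norm_sub_sq_real, real_inner_comm]
    ring
  rw [isoGaussD, isoGaussD, hnorm, mul_assoc, ← Real.exp_add]
  ring_nf

theorem isoGaussD_div_add_isoGaussD_neg :
    isoGaussD D m x / (isoGaussD D m x + isoGaussD D (-m) x) = Real.sigmoid (2 * inner ℝ m x) := by
  have hg := isoGaussD_pos m x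
  rw [isoGaussD_neg, Real.sigmoid_def]
  field_simp

end Gaussian

theorem guidance_shifts_mass_toward_component
    (D : ℕ) (μ : EuclideanSpace ℝ (Fin D))
    (p c : EuclideanSpace ℝ (Fin D) → ℝ)
    (hp : ∀ x, p x = (1/2) * isoGaussD D μ x + (1/2) * isoGaussD D (-μ) x)
    (hc : ∀ x, c x = isoGaussD D μ x / (isoGaussD D μ x + isoGaussD D (-μ) x))
    (w : ℝ → EuclideanSpace ℝ (Fin D) → ℝ)
    (hw : ∀ η x, w η x = p x * (c x) ^ η)
    (hInt : ∀ η ≥ (0:ℝ), Integrable (w η) (volume : Measure (EuclideanSpace ℝ (Fin D))))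
    (hInt' : ∀ η ≥ (0:ℝ), Integrable (fun x => (inner ℝ μ x : ℝ) * w η x)
      (volume : Measure (EuclideanSpace ℝ (Fin D))))
    (F : ℝ → ℝ)
    (hF : ∀ η, F η = (∫ x, (inner ℝ μ x : ℝ) * w η x) / (∫ x, w η x)) :
    ∀ η₁ η₂, 0 ≤ η₁ → η₁ ≤ η₂ → F η₁ ≤ F η₂ := by
  intro η₁ η₂ hη₁ hη₁₂
  have hη₂ : 0 ≤ η₂ := hη₁.trans hη₁₂
  have hc_sigmoid : ∀ x, c x = Real.sigmoid (2 * inner ℝ μ x) := fun x => by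
    rw [hc, isoGaussD_div_add_isoGaussD_neg]
  have hc_pos : ∀ x, 0 < c x := fun x => hc_sigmoid x ▸ Real.sigmoid_pos _
  have hw_pos : ∀ η x, 0 < w η x := fun η x => by
    rw [hw, hp]
    have := isoGaussD_pos μ x
    have := isoGaussD_pos (-μ) x
    have := Real.rpow_pos_of_pos (hc_pos x) η
    positivity
  have htilt : ∀ x, w η₂ x = c x ^ (η₂ - η₁) * w η₁ x := fun x => by
    rw [hw, hw, mul_left_comm, ← Real.rpow_add (hc_pos x), sub_add_cancel]
  have hmono : Monotone fun t : ℝ => Real.sigmoid (2 * t) ^ (η₂ - η₁) := fun a b hab =>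
    Real.rpow_le_rpow (Real.sigmoid_nonneg _) (Real.sigmoid_le (by linarith)) (by linarith)
  have hmonovary : Monovary (fun x => c x ^ (η₂ - η₁)) fun x => inner ℝ μ x := by
    simp only [hc_sigmoid]
    exact (monovary_self _).comp_monotone_left hmono
  rw [hF, hF, div_le_div_iff₀ (integral_pos_of_forall_pos (hw_pos η₁) (hInt η₁ hη₁))
    (integral_pos_of_forall_pos (hw_pos η₂) (hInt η₂ hη₂))]
  exact integral_mul_integral_le_of_monovary hmonovary (fun x => (hw_pos η₁ x).le) htilt
    (hInt η₁ hη₁) (hInt η₂ hη₂) (hInt' η₁ hη₁) (hInt' η₂ hη₂)
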